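/- arXiv:math/9401207 — 3 statements merged into one kernel-verified Lean document; each statement's English description precedes it below -/
import Mathlib

section
/- A function φ ∈ L²(T^N) is analytic (i.e., its Fourier transform is supported in O) if and only if for each j = 1,...,N, the martingale difference d_j(φ) = E(φ|F_j) − E(φ|F_{j−1}) has Fourier transform supported in {(m_1,...,m_N) : m_j > 0, m_{j+1} = ... = m_N = 0}, together with d_0(φ) being constant. -/
open MeasureTheory Complex ProbabilityTheory
noncomputable section
instance : Fact (0 < 2 * Real.pi) := ⟨by positivity⟩
/-- The `N`-dimensional torus `𝕋^N`. -/
abbrev Torus (N : ℕ) := Fin N → AddCircle (2 * Real.pi)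
/-- Normalized Haar (probability) measure on `𝕋^N`. -/
def haarT (N : ℕ) : Measure (Torus N) := Measure.pi fun _ => AddCircle.haarAddCircle
instance (N : ℕ) : IsProbabilityMeasure (haarT N) := by unfold haarT; infer_instance
/-- The character `θ ↦ e^{i⟨m,θ⟩}` on `𝕋^N`. -/
def char {N : ℕ} (m : Fin N → ℤ) (θ : Torus N) : ℂ := ∏ j, fourier (m j) (θ j)
/-- The `m`-th Fourier coefficient of `f : 𝕋^N → ℂ`. -/
def fourierCoeffT {N : ℕ} (f : Torus N → ℂ) (m : Fin N → ℤ) : ℂ :=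
  ∫ θ, char (-m) θ * f θ ∂ haarT N
/-- The half-space `O = {0} ∪ ⋃_j {m : m_j > 0, m_{j+1} = ⋯ = m_N = 0}` in `ℤ^N`. -/
def HalfSpace (N : ℕ) : Set (Fin N → ℤ) :=
  {0} ∪ ⋃ j : Fin N, {m | 0 < m j ∧ ∀ k, j < k → m k = 0}
/-- The σ-algebra `F_n` generated by the first `n` coordinates of `𝕋^N`. -/
def Filt (N : ℕ) (n : ℕ) : MeasurableSpace (Torus N) :=
  MeasurableSpace.comap (fun θ (i : Fin N) => if (i : ℕ) < n then θ i else 0) inferInstance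
/-- The martingale difference `d_j(f) = E(f|F_j) - E(f|F_{j-1})` (`d_0(f) = E(f|F_0)`). -/
def dj (N : ℕ) (j : ℕ) (f : Torus N → ℂ) : Torus N → ℂ :=
  if j = 0 then (haarT N)[f|Filt N 0]
  else (haarT N)[f|Filt N j] - (haarT N)[f|Filt N (j - 1)]

instance (N : ℕ) : Measure.IsAddRightInvariant (haarT N) := by unfold haarT; infer_instance

lemma continuous_char {N : ℕ} (m : Fin N → ℤ) : Continuous (char m) := by
  unfold char
  exact continuous_finset_prod _ fun j _ => (fourier (m j)).continuous.comp (continuous_apply j)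

lemma char_add {N : ℕ} (m : Fin N → ℤ) (θ c : Torus N) :
    char m (θ + c) = char m θ * char m c := by
  unfold char
  rw [← Finset.prod_mul_distrib]
  refine Finset.prod_congr rfl fun j _ => ?_
  have : (θ + c) j = θ j + c j := rfl
  rw [this, fourier_apply, fourier_apply, fourier_apply, smul_add, AddCircle.toCircle_add]
  push_cast; ring

lemma norm_char {N : ℕ} (m : Fin N → ℤ) (θ : Torus N) : ‖char m θ‖ = 1 := by
  unfold char
  rw [norm_prod]
  refine Finset.prod_eq_one fun j _ => ?_
  rw [fourier_apply]
  exact Circle.norm_coe _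

lemma char_memLp {N : ℕ} (m : Fin N → ℤ) : MemLp (char m) 2 (haarT N) :=
  MemLp.of_bound (continuous_char m).aestronglyMeasurable 1
    (Filter.Eventually.of_forall fun θ => le_of_eq (norm_char m θ))

lemma measurable_projT {N : ℕ} (n : ℕ) :
    Measurable (fun (θ : Torus N) (i : Fin N) => if (i : ℕ) < n then θ i else 0) :=
  measurable_pi_lambda _ fun i => by
    by_cases h : (i : ℕ) < n <;> simp only [h, if_true, if_false]
    exacts [measurable_pi_apply i, measurable_const]

lemma Filt_le (N n : ℕ) : Filt N n ≤ (inferInstance : MeasurableSpace (Torus N)) :=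
  (measurable_projT n).comap_le

lemma filt_invariant {N n : ℕ} {w : Torus N → ℂ} (hw : StronglyMeasurable[Filt N n] w)
    (θ c : Torus N) (hc : ∀ i : Fin N, (i : ℕ) < n → c i = 0) : w (θ + c) = w θ := by
  have hm : Measurable[Filt N n] w := hw.measurable
  obtain ⟨A, hA, hpre⟩ :=
    MeasurableSpace.measurableSet_comap.mp (hm (measurableSet_singleton (w θ)))
  have h1 : θ ∈ (fun θ (i : Fin N) => if (i : ℕ) < n then θ i else 0) ⁻¹' A := by
    rw [hpre]; exact rfl
  have hπ : (fun (i : Fin N) => if (i : ℕ) < n then (θ + c) i else 0)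
      = fun (i : Fin N) => if (i : ℕ) < n then θ i else 0 := by
    funext i
    by_cases h : (i : ℕ) < n
    · simp only [h, if_true, Pi.add_apply, hc i h, add_zero]
    · simp only [h, if_false]
  have h2 : θ + c ∈ (fun θ (i : Fin N) => if (i : ℕ) < n then θ i else 0) ⁻¹' A := by
    simpa only [Set.mem_preimage, hπ] using h1
  rw [hpre] at h2
  exact h2
variable {α : Type*} {m m0 : MeasurableSpace α} {μ : Measure α}

lemma condExpL2_ae_eq_condExp [IsProbabilityMeasure μ] (hm : m ≤ m0) {f : α → ℂ}
    (hf : MemLp f 2 μ) :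
    (condExpL2 ℂ ℂ hm (hf.toLp f) : α → ℂ) =ᵐ[μ] μ[f|m] := by
  refine ae_eq_condExp_of_forall_setIntegral_eq hm (hf.integrable one_le_two)
    (fun s hs _ => integrableOn_condExpL2_of_measure_ne_top hm (measure_ne_top μ s) _)
    (fun s hs hμs => ?_) (aestronglyMeasurable_condExpL2 hm _)
  rw [integral_condExpL2_eq hm _ hs hμs.ne]
  exact setIntegral_congr_ae (hm s hs) ((hf.coeFn_toLp).mono fun x hx _ => hx)

lemma integral_mul_condexp [IsProbabilityMeasure μ] (hm : m ≤ m0) {f g : α → ℂ}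
    (hf : MemLp f 2 μ) (hg : MemLp g 2 μ) (hgm : AEStronglyMeasurable[m] g μ) :
    ∫ x, g x * (μ[f|m]) x ∂μ = ∫ x, g x * f x ∂μ := by
  set gc : α → ℂ := fun x => (starRingEnd ℂ) (g x) with hgc_def
  have hgc : MemLp gc 2 μ := by
    refine hg.of_le (Complex.continuous_conj.comp_aestronglyMeasurable hg.1) ?_
    filter_upwards with x
    simp [gc]
  have hgcm : AEStronglyMeasurable[m] gc μ :=
    Complex.continuous_conj.comp_aestronglyMeasurable hgm
  set fL := hf.toLp f
  set gcL := hgc.toLp gc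
  have hgcL : AEStronglyMeasurable[m] (gcL : α → ℂ) μ :=
    hgcm.congr (hgc.coeFn_toLp).symm
  have key : inner (𝕜 := ℂ) ((condExpL2 ℂ ℂ hm fL : α →₂[μ] ℂ)) gcL
      = inner (𝕜 := ℂ) fL gcL := inner_condExpL2_eq_inner_fun hm fL gcL hgcL
  have key2 : inner (𝕜 := ℂ) gcL ((condExpL2 ℂ ℂ hm fL : α →₂[μ] ℂ))
      = inner (𝕜 := ℂ) gcL fL := by
    rw [← inner_conj_symm, key, inner_conj_symm]
  have hE : (condExpL2 ℂ ℂ hm fL : α → ℂ) =ᵐ[μ] μ[f|m] := condExpL2_ae_eq_condExp hm hf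
  have e1 : inner (𝕜 := ℂ) gcL ((condExpL2 ℂ ℂ hm fL : α →₂[μ] ℂ))
      = ∫ x, g x * (μ[f|m]) x ∂μ := by
    rw [MeasureTheory.L2.inner_def]
    refine integral_congr_ae ?_
    filter_upwards [hgc.coeFn_toLp, hE] with x hx1 hx2
    rw [RCLike.inner_apply, hx1, hx2]
    simp [gc]
    ring
  have e2 : inner (𝕜 := ℂ) gcL fL = ∫ x, g x * f x ∂μ := by
    rw [MeasureTheory.L2.inner_def]
    refine integral_congr_ae ?_
    filter_upwards [hgc.coeFn_toLp, hf.coeFn_toLp] with x hx1 hx2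
    rw [RCLike.inner_apply, hx1, hx2]
    simp [gc]
    ring
  rw [← e1, ← e2, key2]

lemma coeff_condexp (N n : ℕ) {φ : Torus N → ℂ} (hφ : MemLp φ 2 (haarT N)) (m : Fin N → ℤ) :
    fourierCoeffT ((haarT N)[φ|Filt N n]) m =
      if ∀ k : Fin N, n ≤ (k : ℕ) → m k = 0 then fourierCoeffT φ m else 0 := by
  split_ifs with h
  · have heq : char (N := N) (-m)
        = fun θ => char (-m) (fun i : Fin N => if (i : ℕ) < n then θ i else 0) := by
      funext θ; unfold char
      refine Finset.prod_congr rfl fun j _ => ?_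
      by_cases hj : (j : ℕ) < n
      · simp [hj]
      · have hmj : m j = 0 := h j (le_of_not_gt hj)
        simp [hj, Pi.neg_apply, hmj, fourier_zero]
    have hchar : StronglyMeasurable[Filt N n] (char (-m)) := by
      rw [heq]
      have hπ : Measurable[Filt N n]
          (fun θ (i : Fin N) => if (i : ℕ) < n then θ i else 0 : Torus N → Torus N) :=
        fun s hs => ⟨s, hs, rfl⟩
      exact ((continuous_char (-m)).measurable.comp hπ).stronglyMeasurable
    exact integral_mul_condexp (Filt_le N n) hφ (char_memLp (-m)) hchar.aestronglyMeasurable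
  · push_neg at h
    obtain ⟨k, hk, hmk⟩ := h
    set c : Torus N := fun i => if i = k then ((Real.pi / (m k) : ℝ) : AddCircle (2 * Real.pi)) else 0
      with hc_def
    have hc0 : ∀ i : Fin N, (i : ℕ) < n → c i = 0 := fun i hi => by
      have hik : i ≠ k := fun hik => by rw [hik] at hi; omega
      simp [c, hik]
    set E := (haarT N)[φ|Filt N n] with hE_def
    have hEinv : ∀ θ, E (θ + c) = E θ := fun θ =>
      filt_invariant stronglyMeasurable_condExp θ c hc0
    have key : fourierCoeffT E m = char (-m) c * fourierCoeffT E m := by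
      conv_lhs => rw [fourierCoeffT,
        ← integral_add_right_eq_self (μ := haarT N) (fun θ => char (-m) θ * E θ) c]
      simp only [char_add, hEinv]
      rw [fourierCoeffT, ← integral_const_mul]
      congr 1; funext θ; ring
    have hval : char (-m) c = -1 := by
      unfold char
      rw [Finset.prod_eq_single k (fun j _ hj => by
            simp [c, hj, fourier_eval_zero]) (fun hk' => absurd (Finset.mem_univ k) hk')]
      have hmk' : ((m k : ℝ)) ≠ 0 := Int.cast_ne_zero.mpr hmk
      have hck : c k = ((Real.pi / (m k) : ℝ) : AddCircle (2 * Real.pi)) := by simp [c]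
      rw [hck, Pi.neg_apply, fourier_coe_apply]
      have hexp : (2 * (Real.pi : ℂ) * Complex.I * ((-(m k) : ℤ) : ℂ)
          * ((Real.pi / (m k) : ℝ) : ℂ) / ((2 * Real.pi : ℝ) : ℂ)) = -(Real.pi * Complex.I) := by
        have hπ : (Real.pi : ℂ) ≠ 0 := Complex.ofReal_ne_zero.mpr Real.pi_ne_zero
        have hmkc : ((m k : ℤ) : ℂ) ≠ 0 := Int.cast_ne_zero.mpr hmk
        push_cast
        field_simp
      rw [hexp, Complex.exp_neg, Complex.exp_pi_mul_I]
      norm_num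
    rw [hval] at key
    have h2 : (2 : ℂ) * fourierCoeffT E m = 0 := by linear_combination key
    have h3 : fourierCoeffT E m = 0 := by
      have := mul_eq_zero.mp h2
      simpa using this
    exact h3

lemma coeff_dj (N : ℕ) (j : ℕ) {φ : Torus N → ℂ} (hφ : MemLp φ 2 (haarT N)) (m : Fin N → ℤ) :
    fourierCoeffT (dj N (j + 1) φ) m =
      (if ∀ k : Fin N, j + 1 ≤ (k : ℕ) → m k = 0 then fourierCoeffT φ m else 0)
      - (if ∀ k : Fin N, j ≤ (k : ℕ) → m k = 0 then fourierCoeffT φ m else 0) := by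
  have hdj : dj N (j + 1) φ
      = (haarT N)[φ|Filt N (j + 1)] - (haarT N)[φ|Filt N j] := by
    rw [dj, if_neg (Nat.succ_ne_zero j)]
    norm_num
  have hint : ∀ n : ℕ, Integrable (fun θ => char (-m) θ * ((haarT N)[φ|Filt N n]) θ) (haarT N) :=
    fun n => (integrable_condExp).bdd_mul (continuous_char (-m)).aestronglyMeasurable
      (Filter.Eventually.of_forall fun θ => le_of_eq (norm_char (-m) θ))
  rw [hdj, ← coeff_condexp N (j + 1) hφ m, ← coeff_condexp N j hφ m,
    fourierCoeffT, fourierCoeffT, fourierCoeffT, ← integral_sub (hint (j + 1)) (hint j)]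
  congr 1; funext θ; simp [mul_sub]

/-- `φ ∈ L²(𝕋^N)` is analytic iff `d_0(φ)` is (a.e.) constant and each martingale difference
`d_j(φ)` has Fourier transform supported in `{m : m_j > 0, m_{j+1} = ⋯ = m_N = 0}`. -/
theorem stmt2 (N : ℕ) (φ : Torus N → ℂ) (hφ : MemLp φ 2 (haarT N)) :
    (∀ m, fourierCoeffT φ m ≠ 0 → m ∈ HalfSpace N) ↔
      ((∃ cst : ℂ, dj N 0 φ =ᵐ[haarT N] fun _ => cst) ∧
        ∀ j : Fin N, ∀ m, fourierCoeffT (dj N ((j : ℕ) + 1) φ) m ≠ 0 →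
          (0 < m j ∧ ∀ k, j < k → m k = 0)) := by
  simp only [HalfSpace, Set.mem_union, Set.mem_singleton_iff, Set.mem_iUnion, Set.mem_setOf_eq]
  constructor
  · intro h
    constructor
    · refine ⟨∫ x, φ x ∂ haarT N, ?_⟩
      have h0 : Filt N 0 = ⊥ := by
        have : (fun (θ : Torus N) (i : Fin N) => if (i : ℕ) < 0 then θ i else 0)
            = fun _ _ => (0 : AddCircle (2 * Real.pi)) := by
          funext θ i; simp
        rw [Filt, this, MeasurableSpace.comap_const]
      rw [dj, if_pos rfl, h0, condExp_bot]
    · intro j m hcoeff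
      rw [coeff_dj N j hφ m] at hcoeff
      by_cases hP1 : ∀ k : Fin N, (j : ℕ) + 1 ≤ (k : ℕ) → m k = 0
      swap
      · have hP0 : ¬ ∀ k : Fin N, (j : ℕ) ≤ (k : ℕ) → m k = 0 := fun hP0 =>
          hP1 fun k hk => hP0 k (by omega)
        rw [if_neg hP1, if_neg hP0, sub_zero] at hcoeff
        exact absurd rfl hcoeff
      by_cases hP0 : ∀ k : Fin N, (j : ℕ) ≤ (k : ℕ) → m k = 0
      · rw [if_pos hP1, if_pos hP0, sub_self] at hcoeff
        exact absurd rfl hcoeff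
      rw [if_pos hP1, if_neg hP0, sub_zero] at hcoeff
      push_neg at hP0
      obtain ⟨k, hk1, hk2⟩ := hP0
      have hkj : k = j := by
        by_contra hne
        exact hk2 (hP1 k (by
          have : (k : ℕ) ≠ (j : ℕ) := fun he => hne (Fin.ext he)
          omega))
      subst hkj
      have hm0 : m ≠ 0 := fun h0 => hk2 (by rw [h0]; rfl)
      rcases h m hcoeff with hmem | hmem
      · exact absurd hmem hm0
      · obtain ⟨j', hj'⟩ := hmem
        obtain ⟨hj'pos, hj'zero⟩ := hj'
        have : j' = k := by
          rcases lt_trichotomy j' k with hlt | heq | hgt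
          · exact absurd (hj'zero k hlt) hk2
          · exact heq
          · exact absurd (hP1 j' (by have := Fin.lt_def.mp hgt; omega)) (by
              intro hz; rw [hz] at hj'pos; exact lt_irrefl 0 hj'pos)
        rw [this] at hj'pos hj'zero
        exact ⟨hj'pos, hj'zero⟩
  · rintro ⟨-, hd⟩ m hcoeff
    by_cases hm0 : m = 0
    · exact Or.inl hm0
    · have hne : ∃ j, m j ≠ 0 := Function.ne_iff.mp hm0
      have hSne : (Finset.univ.filter (fun j : Fin N => m j ≠ 0)).Nonempty := by
        obtain ⟨j, hj⟩ := hne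
        exact ⟨j, Finset.mem_filter.mpr ⟨Finset.mem_univ j, hj⟩⟩
      set j := (Finset.univ.filter (fun j : Fin N => m j ≠ 0)).max' hSne with hj_def
      have hjmem : m j ≠ 0 := (Finset.mem_filter.mp (Finset.max'_mem _ hSne)).2
      have hjmax : ∀ k, j < k → m k = 0 := fun k hk => by
        by_contra hne'
        exact absurd (Finset.le_max' _ k (Finset.mem_filter.mpr ⟨Finset.mem_univ k, hne'⟩))
          (not_le.mpr hk)
      have hP1 : ∀ k : Fin N, (j : ℕ) + 1 ≤ (k : ℕ) → m k = 0 := fun k hk =>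
        hjmax k (Fin.lt_def.mpr (by omega))
      have hP0 : ¬ ∀ k : Fin N, (j : ℕ) ≤ (k : ℕ) → m k = 0 := fun hP0 =>
        hjmem (hP0 j le_rfl)
      have hcd : fourierCoeffT (dj N ((j : ℕ) + 1) φ) m ≠ 0 := by
        rw [coeff_dj N j hφ m, if_pos hP1, if_neg hP0, sub_zero]
        exact hcoeff
      obtain ⟨hpos, hzero⟩ := hd j m hcd
      exact Or.inr ⟨j, hpos, hzero⟩
end
end

section
/- If g is an analytic trigonometric polynomial on T^N with zero constant term and h = g², then for every n and r ∈ [0,1], (Σ_{k=1}^{n−1} d_k(g)(θ_1,...,θ_k) + d_n(g)(θ_1,...,θ_{n−1}, rθ_n))² = Σ_{k=1}^{n−1} d_k(h)(θ_1,...,θ_k) + d_n(h)(θ_1,...,θ_{n−1}, rθ_n). -/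
open MeasureTheory Complex ProbabilityTheory
noncomputable section
/-- The monomial `z ↦ ∏ z_j^{m_j}`, extended harmonically (for `m_j < 0` use `conj z_j^{|m_j|}`). -/
def harmMono {N : ℕ} (m : Fin N → ℤ) (z : Fin N → ℂ) : ℂ :=
  ∏ j, if 0 ≤ m j then z j ^ (m j).toNat else (starRingEnd ℂ) (z j) ^ (-(m j)).toNat
/-- The separately-harmonic extension to `ℂ^N` of the trigonometric polynomial with
coefficients `c`. -/
def harmExt {N : ℕ} (c : (Fin N → ℤ) →₀ ℂ) (z : Fin N → ℂ) : ℂ :=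
  ∑ m ∈ c.support, c m * harmMono m z
/-- The harmonic extension of the martingale difference `d_{k+1}` of the trigonometric
polynomial with coefficients `c` (indices `k : Fin N`, representing `d_{k+1}`). -/
def dExt {N : ℕ} (c : (Fin N → ℤ) →₀ ℂ) (k : Fin N) (z : Fin N → ℂ) : ℂ :=
  ∑ m ∈ c.support.filter (fun m => m k ≠ 0 ∧ ∀ j, k < j → m j = 0), c m * harmMono m z

lemma halfSpace_iff {N : ℕ} {m : Fin N → ℤ} :
    m ∈ HalfSpace N ↔ m = 0 ∨ ∃ j, 0 < m j ∧ ∀ k, j < k → m k = 0 := by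
  unfold HalfSpace
  simp [Set.mem_union, Set.mem_iUnion, Set.mem_setOf_eq]

lemma halfSpace_witness {N : ℕ} {m : Fin N → ℤ} (hm : m ∈ HalfSpace N) (h0 : m ≠ 0) :
    ∃ j, 0 < m j ∧ ∀ k, j < k → m k = 0 := by
  rcases halfSpace_iff.mp hm with h | h
  · exact absurd h h0
  · exact h

lemma halfSpace_add {N : ℕ} {a b : Fin N → ℤ} (ha : a ∈ HalfSpace N) (hb : b ∈ HalfSpace N) :
    a + b ∈ HalfSpace N := by
  rcases halfSpace_iff.mp ha with ha0 | ⟨ja, hja, hza⟩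
  · simpa [ha0] using hb
  rcases halfSpace_iff.mp hb with hb0 | ⟨jb, hjb, hzb⟩
  · simpa [hb0] using ha
  rcases lt_trichotomy ja jb with h | h | h
  · refine halfSpace_iff.mpr (Or.inr ⟨jb, ?_, fun k hk => ?_⟩)
    · have : a jb = 0 := hza jb h
      simpa [this] using hjb
    · have h1 : a k = 0 := hza k (h.trans hk)
      have h2 : b k = 0 := hzb k hk
      simp [h1, h2]
  · subst h
    refine halfSpace_iff.mpr (Or.inr ⟨ja, add_pos hja hjb, fun k hk => ?_⟩)
    simp [hza k hk, hzb k hk]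
  · refine halfSpace_iff.mpr (Or.inr ⟨ja, ?_, fun k hk => ?_⟩)
    · have : b ja = 0 := hzb ja h
      simpa [this] using hja
    · simp [hza k hk, hzb k (h.trans hk)]

lemma halfSpace_add_ne_zero {N : ℕ} {a b : Fin N → ℤ} (ha : a ∈ HalfSpace N)
    (hb : b ∈ HalfSpace N) (ha0 : a ≠ 0) (hb0 : b ≠ 0) : a + b ≠ 0 := by
  obtain ⟨ja, hja, hza⟩ := halfSpace_witness ha ha0
  obtain ⟨jb, hjb, hzb⟩ := halfSpace_witness hb hb0
  intro h
  rcases lt_trichotomy ja jb with hlt | heq | hgt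
  · have := congrFun h jb
    simp [Pi.add_apply, hza jb hlt] at this
    omega
  · subst heq
    have := congrFun h ja
    simp [Pi.add_apply] at this
    omega
  · have := congrFun h ja
    simp [Pi.add_apply, hzb ja hgt] at this
    omega

lemma branch_eq_zpow {u : ℂ} (hu : ‖u‖ = 1) (m : ℤ) :
    (if 0 ≤ m then u ^ m.toNat else (starRingEnd ℂ) u ^ (-m).toNat) = u ^ m := by
  have hu0 : u ≠ 0 := by
    intro h; rw [h] at hu; simp at hu
  have hconj : (starRingEnd ℂ) u = u⁻¹ := by
    have h1 : u * (starRingEnd ℂ) u = 1 := by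
      rw [Complex.mul_conj, Complex.normSq_eq_norm_sq, hu]; norm_num
    field_simp at h1 ⊢
    linear_combination h1
  split_ifs with h
  · rw [← zpow_natCast, Int.toNat_of_nonneg h]
  · push_neg at h
    rw [hconj, inv_pow, ← zpow_natCast, ← zpow_neg,
      Int.toNat_of_nonneg (by omega : (0:ℤ) ≤ -m), neg_neg]

lemma harmMono_torus {N : ℕ} {z : Fin N → ℂ} (hz : ∀ j, ‖z j‖ = 1)
    (m : Fin N → ℤ) : harmMono m z = ∏ j, z j ^ (m j) := by
  unfold harmMono
  exact Finset.prod_congr rfl fun j _ => branch_eq_zpow (hz j) (m j)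

lemma harmMono_mul_torus {N : ℕ} {z : Fin N → ℂ} (hz : ∀ j, ‖z j‖ = 1)
    (a b : Fin N → ℤ) : harmMono a z * harmMono b z = harmMono (a + b) z := by
  rw [harmMono_torus hz, harmMono_torus hz, harmMono_torus hz, ← Finset.prod_mul_distrib]
  refine Finset.prod_congr rfl fun j _ => ?_
  have hz0 : z j ≠ 0 := by
    intro h; have := hz j; rw [h] at this; simp at this
  rw [Pi.add_apply, zpow_add₀ hz0]

lemma harmMono_eq_zero {N : ℕ} {m : Fin N → ℤ} {w : Fin N → ℂ} (j : Fin N)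
    (hw : w j = 0) (hm : m j ≠ 0) : harmMono m w = 0 := by
  unfold harmMono
  apply Finset.prod_eq_zero (Finset.mem_univ j)
  rw [hw]
  split_ifs with h
  · exact zero_pow (by omega)
  · rw [map_zero]; exact zero_pow (by omega)

/-- The character `t ↦ exp(i⟨m,t⟩)` as a monoid hom on `Multiplicative (Fin N → ℝ)`. -/
def chiM {N : ℕ} (m : Fin N → ℤ) : Multiplicative (Fin N → ℝ) →* ℂ where
  toFun t := Complex.exp (∑ j, (m j : ℂ) * ((Multiplicative.toAdd t j : ℝ) * Complex.I))
  map_one' := by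
    simp
  map_mul' x y := by
    simp only [toAdd_mul, Pi.add_apply, Complex.ofReal_add, ← Complex.exp_add,
      ← Finset.sum_add_distrib]
    congr 1
    refine Finset.sum_congr rfl fun j _ => ?_
    ring

lemma chiM_injective {N : ℕ} : Function.Injective (chiM (N := N)) := by
  intro m m' h
  funext j
  have hev := DFunLike.congr_fun h (Multiplicative.ofAdd (Pi.single j (1 : ℝ)))
  simp only [chiM, MonoidHom.coe_mk, OneHom.coe_mk, toAdd_ofAdd] at hev
  have hsum : ∀ (p : Fin N → ℤ),
      ∑ i, (p i : ℂ) * (((Pi.single j (1:ℝ) : Fin N → ℝ) i : ℝ)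
        * Complex.I) = (p j : ℂ) * Complex.I := by
    intro p
    rw [Finset.sum_eq_single j]
    · simp
    · intro i _ hij
      simp [Pi.single_apply, hij]
    · intro hj; exact absurd (Finset.mem_univ j) hj
  rw [hsum m, hsum m'] at hev
  obtain ⟨k, hk⟩ := Complex.exp_eq_exp_iff_exists_int.mp hev
  have him := congrArg Complex.im hk
  simp only [Complex.add_im, Complex.mul_im, Complex.intCast_re, Complex.I_im,
    Complex.intCast_im, Complex.I_re, Complex.mul_re, Complex.ofReal_re, Complex.ofReal_im,
    Complex.re_ofNat, Complex.im_ofNat, Complex.mul_im, Complex.ofReal_mul] at him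
  -- him : (m j : ℝ) = (m' j) + k * (2 * π)
  by_cases hk0 : k = 0
  · subst hk0
    simp at him
    exact_mod_cast him
  · exfalso
    have h2k : (2 * k : ℤ) ≠ 0 := by omega
    have : Irrational ((2 * k : ℤ) * Real.pi) := irrational_pi.intCast_mul h2k
    have heq : ((2 * k : ℤ) : ℝ) * Real.pi = ((m j - m' j : ℤ) : ℝ) := by
      push_cast
      linarith [him]
    rw [heq] at this
    exact Int.not_irrational _ this

/-- Coefficient extraction: a combination of characters vanishing on the torus has
zero coefficients. -/
lemma coeffs_eq {N : ℕ} (T : Finset (Fin N → ℤ)) (e : (Fin N → ℤ) → ℂ)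
    (h : ∀ z : Fin N → ℂ, (∀ j, ‖z j‖ = 1) → ∑ m ∈ T, e m * harmMono m z = 0) :
    ∀ m ∈ T, e m = 0 := by
  have LI : LinearIndependent ℂ
      (fun m : Fin N → ℤ => ((chiM m : Multiplicative (Fin N → ℝ) →* ℂ) :
        Multiplicative (Fin N → ℝ) → ℂ)) :=
    (linearIndependent_monoidHom (Multiplicative (Fin N → ℝ)) ℂ).comp chiM chiM_injective
  have h0 : ∑ m ∈ T, e m • ((chiM m : Multiplicative (Fin N → ℝ) →* ℂ) :
      Multiplicative (Fin N → ℝ) → ℂ) = 0 := by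
    funext t
    simp only [Finset.sum_apply, Pi.smul_apply, smul_eq_mul, Pi.zero_apply]
    set zt : Fin N → ℂ := fun j => Complex.exp ((Multiplicative.toAdd t j : ℝ) * Complex.I)
      with hzt
    have habs : ∀ j, ‖zt j‖ = 1 := fun j => Complex.norm_exp_ofReal_mul_I _
    have hchi : ∀ m : Fin N → ℤ, chiM m t = harmMono m zt := by
      intro m
      rw [harmMono_torus habs]
      simp only [chiM, MonoidHom.coe_mk, OneHom.coe_mk]
      rw [Complex.exp_sum]
      refine Finset.prod_congr rfl fun j _ => ?_
      rw [← Complex.exp_int_mul]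
    calc ∑ m ∈ T, e m * chiM m t = ∑ m ∈ T, e m * harmMono m zt := by
          exact Finset.sum_congr rfl fun m _ => by rw [hchi m]
      _ = 0 := h zt habs
  exact fun m hm => linearIndependent_iff'.mp LI T e h0 m hm

/-- Lemma B: the truncated sum of martingale differences equals the full extension when the
evaluation point vanishes on coordinates `≥ n`. -/
lemma sumDExt {N : ℕ} (n : ℕ) (d : (Fin N → ℤ) →₀ ℂ)
    (hd : ∀ m ∈ d.support, m ≠ (0 : Fin N → ℤ) ∧ m ∈ HalfSpace N)
    (w : Fin N → ℂ) (hw : ∀ j : Fin N, ¬((j : ℕ) < n) → w j = 0) :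
    ∑ k : Fin N, (if (k : ℕ) < n then dExt d k w else 0) = harmExt d w := by
  have step1 : ∀ k : Fin N, ¬((k : ℕ) < n) → dExt d k w = 0 := by
    intro k hk
    refine Finset.sum_eq_zero fun m hm => ?_
    simp only [Finset.mem_filter] at hm
    rw [harmMono_eq_zero k (hw k hk) hm.2.1, mul_zero]
  have step2 : ∑ k : Fin N, (if (k : ℕ) < n then dExt d k w else 0) = ∑ k : Fin N, dExt d k w := by
    refine Finset.sum_congr rfl fun k _ => ?_
    split_ifs with h
    · rfl
    · exact (step1 k h).symm
  rw [step2]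
  unfold dExt harmExt
  have step3 : ∀ k : Fin N,
      ∑ m ∈ d.support.filter (fun m => m k ≠ 0 ∧ ∀ j, k < j → m j = 0), d m * harmMono m w
      = ∑ m ∈ d.support,
          if (m k ≠ 0 ∧ ∀ j, k < j → m j = 0) then d m * harmMono m w else 0 := by
    intro k
    rw [Finset.sum_filter]
  simp only [step3]
  rw [Finset.sum_comm]
  refine Finset.sum_congr rfl fun m hm => ?_
  obtain ⟨hm0, hmH⟩ := hd m hm
  obtain ⟨j, hj1, hj2⟩ := halfSpace_witness hmH hm0
  rw [Finset.sum_eq_single j]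
  · rw [if_pos ⟨hj1.ne', hj2⟩]
  · intro k _ hkj
    rw [if_neg]
    rintro ⟨h1, h2⟩
    rcases lt_or_gt_of_ne hkj with h | h
    · exact hj1.ne' (h2 j h)
    · exact h1 (hj2 k h)
  · intro hj; exact absurd (Finset.mem_univ j) hj

/-- Lemma C: multiplicativity of `harmMono` at the special evaluation point, for half-space
frequencies. -/
lemma harmMono_mul_special {N : ℕ} (n : ℕ) (w : Fin N → ℂ)
    (hw0 : ∀ j : Fin N, ¬((j : ℕ) < n) → w j = 0)
    (hw1 : ∀ j : Fin N, (j : ℕ) + 1 < n → ‖w j‖ = 1)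
    {a b : Fin N → ℤ} (ha : a ∈ HalfSpace N) (hb : b ∈ HalfSpace N) :
    harmMono a w * harmMono b w = harmMono (a + b) w := by
  by_cases hcase : ∀ j : Fin N, n ≤ (j : ℕ) → a j = 0 ∧ b j = 0
  · -- case 2: both vanish on coordinates ≥ n
    have nonneg_at : ∀ (m : Fin N → ℤ), m ∈ HalfSpace N → (∀ j : Fin N, n ≤ (j : ℕ) → m j = 0) →
        ∀ j : Fin N, (j : ℕ) + 1 = n → 0 ≤ m j := by
      intro m hmH hm0 j hj
      rcases halfSpace_iff.mp hmH with h | ⟨jm, hjm, hzm⟩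
      · simp [h]
      rcases lt_trichotomy j jm with h | h | h
      · exfalso
        have : n ≤ (jm : ℕ) := by
          have : (j : ℕ) < (jm : ℕ) := h
          omega
        exact hjm.ne' (hm0 jm this)
      · subst h; exact hjm.le
      · exact (hzm j h).ge
    unfold harmMono
    rw [← Finset.prod_mul_distrib]
    refine Finset.prod_congr rfl fun j _ => ?_
    by_cases hj1 : (j : ℕ) + 1 = n
    · have ha' : 0 ≤ a j := nonneg_at a ha (fun i hi => (hcase i hi).1) j hj1
      have hb' : 0 ≤ b j := nonneg_at b hb (fun i hi => (hcase i hi).2) j hj1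
      rw [Pi.add_apply, if_pos ha', if_pos hb', if_pos (add_nonneg ha' hb'),
        Int.toNat_add ha' hb', pow_add]
    · by_cases hj2 : (j : ℕ) + 1 < n
      · have habs := hw1 j hj2
        have hne : w j ≠ 0 := by intro h; rw [h] at habs; simp at habs
        rw [branch_eq_zpow habs, branch_eq_zpow habs, branch_eq_zpow habs, Pi.add_apply,
          zpow_add₀ hne]
      · have hjn : n ≤ (j : ℕ) := by omega
        have h1 : a j = 0 := (hcase j hjn).1
        have h2 : b j = 0 := (hcase j hjn).2
        simp [h1, h2]
  · -- case 1: some coordinate ≥ n is nonzero; both sides vanish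
    push_neg at hcase
    have hsne : (Finset.univ.filter
        (fun j : Fin N => n ≤ (j : ℕ) ∧ (a j ≠ 0 ∨ b j ≠ 0))).Nonempty := by
      obtain ⟨j, hj1, hj2⟩ := hcase
      refine ⟨j, Finset.mem_filter.mpr ⟨Finset.mem_univ j, hj1, ?_⟩⟩
      by_contra h
      push_neg at h
      exact hj2 h.1 h.2
    set s := Finset.univ.filter (fun j : Fin N => n ≤ (j : ℕ) ∧ (a j ≠ 0 ∨ b j ≠ 0)) with hs
    set js := s.max' hsne with hjs
    have hmem : js ∈ s := s.max'_mem hsne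
    rw [hs, Finset.mem_filter] at hmem
    obtain ⟨-, hjn, hab⟩ := hmem
    have hwjs : w js = 0 := hw0 js (by omega)
    have lhs0 : harmMono a w * harmMono b w = 0 := by
      rcases hab with h | h
      · rw [harmMono_eq_zero js hwjs h, zero_mul]
      · rw [harmMono_eq_zero js hwjs h, mul_zero]
    rw [lhs0]
    -- show (a+b) js ≠ 0
    have hsum : (a + b) js ≠ 0 := by
      intro hsum0
      rw [Pi.add_apply] at hsum0
      have hboth : a js ≠ 0 ∧ b js ≠ 0 := by
        rcases hab with h | h
        · exact ⟨h, by intro h'; rw [h'] at hsum0; omega⟩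
        · exact ⟨by intro h'; rw [h'] at hsum0; omega, h⟩
      have ha0 : a ≠ 0 := fun h => hboth.1 (by rw [h]; rfl)
      have hb0 : b ≠ 0 := fun h => hboth.2 (by rw [h]; rfl)
      obtain ⟨ja, hja, hza⟩ := halfSpace_witness ha ha0
      obtain ⟨jb, hjb, hzb⟩ := halfSpace_witness hb hb0
      have hjale : js ≤ ja := by
        by_contra h
        push_neg at h
        exact hboth.1 (hza js h)
      have hjble : js ≤ jb := by
        by_contra h
        push_neg at h
        exact hboth.2 (hzb js h)
      have hjamem : ja ∈ s := by
        rw [hs, Finset.mem_filter]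
        refine ⟨Finset.mem_univ _, ?_, Or.inl hja.ne'⟩
        have : (js : ℕ) ≤ (ja : ℕ) := hjale
        omega
      have hjbmem : jb ∈ s := by
        rw [hs, Finset.mem_filter]
        refine ⟨Finset.mem_univ _, ?_, Or.inr hjb.ne'⟩
        have : (js : ℕ) ≤ (jb : ℕ) := hjble
        omega
      have heqa : ja = js := le_antisymm (s.le_max' ja hjamem) hjale
      have heqb : jb = js := le_antisymm (s.le_max' jb hjbmem) hjble
      rw [heqa] at hja
      rw [heqb] at hjb
      omega
    exact (harmMono_eq_zero js hwjs hsum).symm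

/-- If `g` is an analytic trigonometric polynomial on `𝕋^N` (coefficients `c`) with zero
constant term and `h = g²` (coefficients `c2`), then for every `1 ≤ n ≤ N`, `r ∈ [0,1]` and
`θ ∈ 𝕋^N`,
`(∑_{k=1}^{n-1} d_k(g)(θ₁,…,θ_k) + d_n(g)(θ₁,…,rθ_n))²
  = ∑_{k=1}^{n-1} d_k(h)(θ₁,…,θ_k) + d_n(h)(θ₁,…,rθ_n)`. -/
theorem stmt12 (N : ℕ) (c c2 : (Fin N → ℤ) →₀ ℂ) (hc0 : c 0 = 0)
    (hsupp : (c.support : Set (Fin N → ℤ)) ⊆ HalfSpace N)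
    (hsq : ∀ z : Fin N → ℂ, (∀ j, ‖z j‖ = 1) → harmExt c2 z = harmExt c z ^ 2)
    (n : ℕ) (hn1 : 1 ≤ n) (hnN : n ≤ N) (r : ℝ) (hr : r ∈ Set.Icc (0 : ℝ) 1)
    (z : Fin N → ℂ) (hz : ∀ j, ‖z j‖ = 1) :
    (∑ k : Fin N, if (k : ℕ) < n then
        dExt c k (fun j => if (j : ℕ) + 1 = n then (r : ℂ) * z j
          else if (j : ℕ) + 1 < n then z j else 0) else 0) ^ 2 =
      ∑ k : Fin N, if (k : ℕ) < n then
        dExt c2 k (fun j => if (j : ℕ) + 1 = n then (r : ℂ) * z j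
          else if (j : ℕ) + 1 < n then z j else 0) else 0 := by
  set w : Fin N → ℂ := fun j => if (j : ℕ) + 1 = n then (r : ℂ) * z j
    else if (j : ℕ) + 1 < n then z j else 0 with hwdef
  have hw0 : ∀ j : Fin N, ¬((j : ℕ) < n) → w j = 0 := by
    intro j hj
    simp only [hwdef]
    rw [if_neg (by omega), if_neg (by omega)]
  have hw1 : ∀ j : Fin N, (j : ℕ) + 1 < n → ‖w j‖ = 1 := by
    intro j hj
    simp only [hwdef]
    rw [if_neg (by omega), if_pos hj]
    exact hz j
  set P : Finset ((Fin N → ℤ) × (Fin N → ℤ)) := c.support ×ˢ c.support with hP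
  set T : Finset (Fin N → ℤ) := c2.support ∪ P.image (fun p => p.1 + p.2) with hT
  -- the expansion of the square as a combination of characters indexed by T
  have expand : ∀ v : Fin N → ℂ,
      (∀ p ∈ P, harmMono p.1 v * harmMono p.2 v = harmMono (p.1 + p.2) v) →
      harmExt c v ^ 2 = ∑ m ∈ T,
        (∑ p ∈ P.filter (fun p => p.1 + p.2 = m), c p.1 * c p.2) * harmMono m v := by
    intro v hv
    have e1 : harmExt c v ^ 2 = ∑ p ∈ P, (c p.1 * harmMono p.1 v) * (c p.2 * harmMono p.2 v) := by
      rw [sq]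
      unfold harmExt
      rw [Finset.sum_mul_sum, hP, ← Finset.sum_product']
    rw [e1, Finset.sum_congr rfl (fun p hp => by rw [← hv p hp]; ring :
      ∀ p ∈ P, (c p.1 * harmMono p.1 v) * (c p.2 * harmMono p.2 v)
        = c p.1 * c p.2 * harmMono (p.1 + p.2) v), eq_comm]
    calc ∑ m ∈ T, (∑ p ∈ P.filter (fun p => p.1 + p.2 = m), c p.1 * c p.2) * harmMono m v
        = ∑ m ∈ T, ∑ p ∈ P.filter (fun p => p.1 + p.2 = m),
            c p.1 * c p.2 * harmMono (p.1 + p.2) v := by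
          refine Finset.sum_congr rfl fun m _ => ?_
          rw [Finset.sum_mul]
          refine Finset.sum_congr rfl fun p hp => ?_
          rw [(Finset.mem_filter.mp hp).2]
      _ = ∑ p ∈ P, c p.1 * c p.2 * harmMono (p.1 + p.2) v :=
          Finset.sum_fiberwise_of_maps_to
            (fun p hp => Finset.mem_union_right _ (Finset.mem_image_of_mem _ hp)) _
  have c2sum : ∀ v : Fin N → ℂ, harmExt c2 v = ∑ m ∈ T, c2 m * harmMono m v := by
    intro v
    unfold harmExt
    exact Finset.sum_subset Finset.subset_union_left
      (fun x _ hx => by rw [Finsupp.notMem_support_iff.mp hx, zero_mul])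
  have herr : ∀ m ∈ T,
      c2 m - (∑ p ∈ P.filter (fun p => p.1 + p.2 = m), c p.1 * c p.2) = 0 := by
    apply coeffs_eq
    intro zz hzz
    calc ∑ m ∈ T, (c2 m - ∑ p ∈ P.filter (fun p => p.1 + p.2 = m), c p.1 * c p.2)
          * harmMono m zz
        = (∑ m ∈ T, c2 m * harmMono m zz) - ∑ m ∈ T,
            (∑ p ∈ P.filter (fun p => p.1 + p.2 = m), c p.1 * c p.2) * harmMono m zz := by
          rw [← Finset.sum_sub_distrib]
          exact Finset.sum_congr rfl fun m _ => by ring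
      _ = harmExt c2 zz - harmExt c zz ^ 2 := by
          rw [← c2sum zz, ← expand zz (fun p _ => harmMono_mul_torus hzz p.1 p.2)]
      _ = 0 := by rw [hsq zz hzz, sub_self]
  have hc2supp : ∀ m ∈ c2.support, m ≠ (0 : Fin N → ℤ) ∧ m ∈ HalfSpace N := by
    intro m hm
    have h0 := herr m (Finset.mem_union_left _ hm)
    have hc2m : c2 m ≠ 0 := Finsupp.mem_support_iff.mp hm
    have hqne : (∑ p ∈ P.filter (fun p => p.1 + p.2 = m), c p.1 * c p.2) ≠ 0 := by
      intro h
      rw [h, sub_zero] at h0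
      exact hc2m h0
    obtain ⟨p, hp, -⟩ := Finset.exists_ne_zero_of_sum_ne_zero hqne
    rw [Finset.mem_filter] at hp
    obtain ⟨hpP, hpm⟩ := hp
    rw [hP, Finset.mem_product] at hpP
    have haH : p.1 ∈ HalfSpace N := hsupp (Finset.mem_coe.mpr hpP.1)
    have hbH : p.2 ∈ HalfSpace N := hsupp (Finset.mem_coe.mpr hpP.2)
    have ha0 : p.1 ≠ 0 := by
      intro h
      exact Finsupp.mem_support_iff.mp hpP.1 (h ▸ hc0)
    have hb0 : p.2 ≠ 0 := by
      intro h
      exact Finsupp.mem_support_iff.mp hpP.2 (h ▸ hc0)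
    rw [← hpm]
    exact ⟨halfSpace_add_ne_zero haH hbH ha0 hb0, halfSpace_add haH hbH⟩
  have hmulw : ∀ p ∈ P, harmMono p.1 w * harmMono p.2 w = harmMono (p.1 + p.2) w := by
    intro p hp
    rw [hP, Finset.mem_product] at hp
    exact harmMono_mul_special n w hw0 hw1 (hsupp (Finset.mem_coe.mpr hp.1))
      (hsupp (Finset.mem_coe.mpr hp.2))
  rw [sumDExt n c (fun m hm => ⟨fun h => Finsupp.mem_support_iff.mp hm (h ▸ hc0),
      hsupp (Finset.mem_coe.mpr hm)⟩) w hw0,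
    sumDExt n c2 hc2supp w hw0, expand w hmulw, c2sum w]
  refine Finset.sum_congr rfl fun m hm => ?_
  rw [sub_eq_zero.mp (herr m hm)]
end
end

section
/- Let S and T be nonnegative random variables. Suppose there are constants c ≥ 1, α = 4, β = 2 such that for every λ > 0 with P(S > λ) ≤ 4·P(S > 2λ), one has P(S > λ) ≤ c·P(c·T > λ). Then the weak-L¹ quasinorms satisfy sup_λ λ·P(S > λ) ≤ C·sup_λ λ·P(T > λ) for a constant C depending only on c. -/
open MeasureTheory ENNReal
noncomputable section

/-- If `S, T ≥ 0` satisfy the good-λ relation: for every `λ > 0` with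
`P(S > λ) ≤ 4 P(S > 2λ)` one has `P(S > λ) ≤ c P(cT > λ)`, then
`‖S‖*₁ ≤ C ‖T‖*₁` for a constant `C` depending only on `c`. -/
theorem stmt16 (c : ℝ) (hc : 1 ≤ c) :
    ∃ C : ℝ, 0 < C ∧
      ∀ {Ω : Type} [MeasurableSpace Ω] (P : Measure Ω) [IsProbabilityMeasure P]
        (S T : Ω → ℝ), (∀ ω, 0 ≤ S ω) → (∀ ω, 0 ≤ T ω) →
        (∀ l : ℝ, 0 < l → P {ω | l < S ω} ≤ 4 * P {ω | 2 * l < S ω} →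
          P {ω | l < S ω} ≤ ENNReal.ofReal c * P {ω | l < c * T ω}) →
        (⨆ l : ℝ, ENNReal.ofReal l * P {ω | l < S ω}) ≤
          ENNReal.ofReal C * ⨆ l : ℝ, ENNReal.ofReal l * P {ω | l < T ω} := by
  have hc0 : (0:ℝ) < c := lt_of_lt_of_le one_pos hc
  refine ⟨4 * c^2, by positivity, ?_⟩
  intro Ω _ P _ S T hS hT hST
  set B := ⨆ l : ℝ, ENNReal.ofReal l * P {ω | l < T ω} with hB
  set K := ENNReal.ofReal (2 * c^2) * B with hK
  set f : ℝ → ℝ≥0∞ := fun l => ENNReal.ofReal l * P {ω | l < S ω} with hf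
  have fle : ∀ μ : ℝ, f μ ≤ ENNReal.ofReal μ := fun μ => by
    calc f μ ≤ ENNReal.ofReal μ * 1 := mul_le_mul_right prob_le_one _
    _ = _ := mul_one _
  have one_step : ∀ μ : ℝ, 0 < μ → f μ ≤ K + 2⁻¹ * f (μ / 2) := by
    intro μ hμ
    have hsub : P {ω | μ < S ω} ≤ P {ω | μ/2 < S ω} := by
      apply measure_mono
      intro ω hω
      simp only [Set.mem_setOf_eq] at *
      linarith
    by_cases hgood : P {ω | μ/2 < S ω} ≤ 4 * P {ω | 2 * (μ/2) < S ω}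
    · have h1 := hST (μ/2) (by positivity) hgood
      have hset : {ω | μ/2 < c * T ω} = {ω | μ/(2*c) < T ω} := by
        ext ω
        simp only [Set.mem_setOf_eq]
        rw [div_lt_iff₀ (by positivity : (0:ℝ) < 2), div_lt_iff₀ (by positivity : (0:ℝ) < 2*c)]
        constructor <;> intro h <;> nlinarith
      have hKb : f μ ≤ K := by
        calc f μ ≤ ENNReal.ofReal μ * P {ω | μ/2 < S ω} :=
              mul_le_mul_right hsub _
        _ ≤ ENNReal.ofReal μ * (ENNReal.ofReal c * P {ω | μ/(2*c) < T ω}) := by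
              rw [← hset]; exact mul_le_mul_right h1 _
        _ = ENNReal.ofReal (2*c^2) * (ENNReal.ofReal (μ/(2*c)) * P {ω | μ/(2*c) < T ω}) := by
              rw [← mul_assoc, ← mul_assoc, ← ENNReal.ofReal_mul (by positivity),
                ← ENNReal.ofReal_mul (by positivity)]
              congr 2
              field_simp
        _ ≤ ENNReal.ofReal (2*c^2) * B := by
              apply mul_le_mul_right
              exact le_iSup (fun l : ℝ => ENNReal.ofReal l * P {ω | l < T ω}) (μ/(2*c))
        _ = K := hK.symm
      exact hKb.trans le_self_add
    · push_neg at hgood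
      rw [show 2 * (μ/2) = μ by ring] at hgood
      have h4 : P {ω | μ < S ω} ≤ 4⁻¹ * P {ω | μ/2 < S ω} := by
        calc P {ω | μ < S ω} = 4⁻¹ * (4 * P {ω | μ < S ω}) := by
              rw [← mul_assoc, ENNReal.inv_mul_cancel (by norm_num) (by norm_num), one_mul]
        _ ≤ 4⁻¹ * P {ω | μ/2 < S ω} := mul_le_mul_right hgood.le _
      have : f μ ≤ 2⁻¹ * f (μ/2) := by
        calc f μ ≤ ENNReal.ofReal μ * (4⁻¹ * P {ω | μ/2 < S ω}) :=
              mul_le_mul_right h4 _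
        _ = 2⁻¹ * (ENNReal.ofReal (μ/2) * P {ω | μ/2 < S ω}) := by
              rw [ENNReal.ofReal_div_of_pos (by norm_num)]
              rw [ENNReal.div_eq_inv_mul]
              have h2 : (ENNReal.ofReal 2)⁻¹ = (2:ℝ≥0∞)⁻¹ := by norm_num
              rw [h2]
              ring_nf
              rw [show (4:ℝ≥0∞)⁻¹ = 2⁻¹ * 2⁻¹ by
                rw [← ENNReal.mul_inv (by norm_num) (by norm_num)]; norm_num]
              ring
      exact this.trans le_add_self
  have claim : ∀ (μ : ℝ), 0 < μ → ∀ n : ℕ,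
      f μ ≤ (∑ i ∈ Finset.range n, (2⁻¹:ℝ≥0∞)^i) * K + (2⁻¹:ℝ≥0∞)^n * f (μ / 2^n) := by
    intro μ hμ n
    induction n with
    | zero => simp
    | succ n ih =>
      have hμn : (0:ℝ) < μ / 2^n := by positivity
      calc f μ ≤ (∑ i ∈ Finset.range n, (2⁻¹:ℝ≥0∞)^i) * K + (2⁻¹)^n * f (μ / 2^n) := ih
      _ ≤ (∑ i ∈ Finset.range n, (2⁻¹:ℝ≥0∞)^i) * K
            + (2⁻¹)^n * (K + 2⁻¹ * f (μ / 2^n / 2)) := by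
          gcongr
          exact one_step _ hμn
      _ = (∑ i ∈ Finset.range (n+1), (2⁻¹:ℝ≥0∞)^i) * K + (2⁻¹)^(n+1) * f (μ / 2^(n+1)) := by
          rw [Finset.sum_range_succ, div_div, ← pow_succ]
          ring
  have hsum : ∀ n : ℕ, (∑ i ∈ Finset.range n, (2⁻¹:ℝ≥0∞)^i) ≤ 2 := by
    intro n
    calc (∑ i ∈ Finset.range n, (2⁻¹:ℝ≥0∞)^i) ≤ ∑' i : ℕ, (2⁻¹:ℝ≥0∞)^i :=
        ENNReal.sum_le_tsum _
    _ = (1 - 2⁻¹)⁻¹ := ENNReal.tsum_geometric _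
    _ = 2 := by rw [ENNReal.one_sub_inv_two, inv_inv]
  have key : ∀ μ : ℝ, 0 < μ → f μ ≤ 2 * K := by
    intro μ hμ
    have h4 : ∀ n : ℕ, f μ ≤ 2 * K + ENNReal.ofReal (μ / 4^n) := by
      intro n
      calc f μ ≤ _ := claim μ hμ n
      _ ≤ 2 * K + (2⁻¹:ℝ≥0∞)^n * ENNReal.ofReal (μ / 2^n) := by
          gcongr
          · exact hsum n
          · exact fle _
      _ = 2 * K + ENNReal.ofReal (μ / 4^n) := by
          congr 1
          rw [show ((2:ℝ≥0∞)⁻¹)^n = ENNReal.ofReal ((2⁻¹:ℝ)^n) by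
            rw [ENNReal.ofReal_pow (by norm_num)]
            congr 1
            rw [ENNReal.ofReal_inv_of_pos (by norm_num)]
            norm_num]
          rw [← ENNReal.ofReal_mul (by positivity)]
          congr 1
          rw [show (4:ℝ) = 2 * 2 by norm_num, mul_pow]
          field_simp
          rw [← mul_pow]; norm_num
    by_cases hKtop : 2 * K = ⊤
    · simp [hKtop]
    refine ENNReal.le_of_forall_pos_le_add fun ε hε _ => ?_
    have hε' : (0:ℝ) < (ε:ℝ) := hε
    obtain ⟨n, hn⟩ := exists_pow_lt_of_lt_one (show (0:ℝ) < (ε:ℝ)/μ by positivity)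
      (show (1/4:ℝ) < 1 by norm_num)
    have hlt : μ / 4^n < (ε:ℝ) := by
      have h1 : μ / 4^n = μ * (1/4)^n := by
        rw [div_pow, one_pow]
        ring
      rw [h1]
      calc μ * (1/4:ℝ)^n < μ * ((ε:ℝ)/μ) := by
            exact mul_lt_mul_of_pos_left hn hμ
      _ = (ε:ℝ) := by field_simp
    calc f μ ≤ 2*K + ENNReal.ofReal (μ/4^n) := h4 n
    _ ≤ 2*K + (ε:ℝ≥0∞) := by
        gcongr
        rw [← ENNReal.ofReal_coe_nnreal]
        exact ENNReal.ofReal_le_ofReal hlt.le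
  apply iSup_le
  intro l
  rcases le_or_gt l 0 with hl | hl
  · simp [hf, ENNReal.ofReal_eq_zero.2 hl]
  · calc f l ≤ 2 * K := key l hl
    _ = ENNReal.ofReal (4*c^2) * B := by
        rw [hK, ← mul_assoc]
        congr 1
        rw [show (2:ℝ≥0∞) = ENNReal.ofReal 2 by norm_num,
          ← ENNReal.ofReal_mul (by norm_num)]
        congr 1
        ring
end
end
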